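/- arXiv:2303.08043 — 5 statements merged into one kernel-verified Lean document; each statement's English description precedes it below -/
import Mathlib

section
/- For a unit-speed spherical curve ξ with geodesic curvature κ(s) = det(ξ, ξ', ξ'') and spherical angular momentum K(s) = x'y − xy', one has K'(s) = κ(s)·z'(s), where z is the third coordinate of ξ. -/
/-! The tangent ξ' is orthogonal to ξ and, by unit speed, to ξ''. Expanding ξ'' in the
orthonormal frame (ξ, ξ', ξ × ξ') by Cramer's rule therefore gives ξ'' = ⟨ξ'', ξ⟩ ξ + κ (ξ × ξ').
In K' = x'' y − x y'' the ξ-component cancels, and the (ξ × ξ')-component leaves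
κ (z' (x² + y²) − z (x x' + y y')) = κ (z' (1 − z²) + z² z') = κ z'. -/

theorem sum_mul_deriv_eq_zero_of_sum_sq_eq {x y z : ℝ → ℝ} {c : ℝ}
    (hx : Differentiable ℝ x) (hy : Differentiable ℝ y) (hz : Differentiable ℝ z)
    (h : ∀ s, x s ^ 2 + y s ^ 2 + z s ^ 2 = c) (s : ℝ) :
    x s * deriv x s + y s * deriv y s + z s * deriv z s = 0 := by
  have hderiv : HasDerivAt (fun t => x t ^ 2 + y t ^ 2 + z t ^ 2)
      (2 * (x s * deriv x s + y s * deriv y s + z s * deriv z s)) s := by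
    refine ((((hx s).hasDerivAt.fun_pow 2).fun_add ((hy s).hasDerivAt.fun_pow 2)).fun_add
      ((hz s).hasDerivAt.fun_pow 2)).congr_deriv ?_
    norm_num
    ring
  rw [funext h] at hderiv
  linarith [hderiv.unique (hasDerivAt_const s c)]

theorem deriv_deriv_mul_sub_mul_deriv {𝕜 : Type*} [NontriviallyNormedField 𝕜] {f g : 𝕜 → 𝕜}
    (hf : ContDiff 𝕜 2 f) (hg : ContDiff 𝕜 2 g) (s : 𝕜) :
    deriv (fun t => deriv f t * g t - f t * deriv g t) s
      = deriv (deriv f) s * g s - f s * deriv (deriv g) s := by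
  have hderiv := ((hf.differentiable_deriv_two s).hasDerivAt.mul
    ((hg.differentiable two_ne_zero) s).hasDerivAt).sub
    (((hf.differentiable two_ne_zero) s).hasDerivAt.mul (hg.differentiable_deriv_two s).hasDerivAt)
  exact hderiv.deriv.trans (by ring)

theorem eq_dot_mul_add_det_mul_cross_of_orthonormal {x y z x' y' z' x'' y'' z'' κ : ℝ}
    (hξ : x ^ 2 + y ^ 2 + z ^ 2 = 1) (hξ' : x' ^ 2 + y' ^ 2 + z' ^ 2 = 1)
    (hξξ' : x * x' + y * y' + z * z' = 0) (hξ'ξ'' : x' * x'' + y' * y'' + z' * z'' = 0)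
    (hκ : κ = x * (y' * z'' - z' * y'') - y * (x' * z'' - z' * x'') + z * (x' * y'' - y' * x'')) :
    x'' = (x * x'' + y * y'' + z * z'') * x + κ * (y * z' - z * y') ∧
      y'' = (x * x'' + y * y'' + z * z'') * y + κ * (z * x' - x * z') := by
  subst hκ
  set r := x * x'' + y * y'' + z * z''
  -- With u = (x,y,z), v = (x',y',z'), w = (x'',y'',z''), Cramer's rule in the frame (u, v, u × v)
  -- is the ring identity
  -- |u × v|² w = (|v|² ⟨w,u⟩ − ⟨u,v⟩⟨w,v⟩) u + (|u|² ⟨w,v⟩ − ⟨u,v⟩⟨w,u⟩) v + det(u,v,w) (u × v).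
  constructor
  · linear_combination
      (-x'' * (x' ^ 2 + y' ^ 2 + z' ^ 2)) * hξ + (-x'' + r * x) * hξ'
      + (x'' * (x * x' + y * y' + z * z') - x * (x' * x'' + y' * y'' + z' * z'') - r * x') * hξξ'
      + ((x ^ 2 + y ^ 2 + z ^ 2) * x') * hξ'ξ''
  · linear_combination
      (-y'' * (x' ^ 2 + y' ^ 2 + z' ^ 2)) * hξ + (-y'' + r * y) * hξ'
      + (y'' * (x * x' + y * y' + z * z') - y * (x' * x'' + y' * y'' + z' * z'') - r * y') * hξξ'
      + ((x ^ 2 + y ^ 2 + z ^ 2) * y') * hξ'ξ''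

/-- For a unit-speed spherical curve ξ = (x,y,z) with geodesic curvature
κ(s) = det(ξ, ξ', ξ'') and spherical angular momentum K = x'y − xy',
one has K'(s) = κ(s)·z'(s). -/
theorem angular_momentum_deriv_eq_curvature_mul_z_deriv
    (x y z : ℝ → ℝ)
    (hx : ContDiff ℝ 2 x) (hy : ContDiff ℝ 2 y) (hz : ContDiff ℝ 2 z)
    (hsphere : ∀ s, x s ^ 2 + y s ^ 2 + z s ^ 2 = 1)
    (hunit : ∀ s, deriv x s ^ 2 + deriv y s ^ 2 + deriv z s ^ 2 = 1)
    (κ K : ℝ → ℝ)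
    -- κ(s) = det(ξ(s), ξ'(s), ξ''(s))
    (hκ : ∀ s, κ s =
      x s * (deriv y s * deriv (deriv z) s - deriv z s * deriv (deriv y) s)
      - y s * (deriv x s * deriv (deriv z) s - deriv z s * deriv (deriv x) s)
      + z s * (deriv x s * deriv (deriv y) s - deriv y s * deriv (deriv x) s))
    (hK : ∀ s, K s = deriv x s * y s - x s * deriv y s) :
    ∀ s, deriv K s = κ s * deriv z s := by
  intro s
  have hξξ' := sum_mul_deriv_eq_zero_of_sum_sq_eq
    (hx.differentiable two_ne_zero) (hy.differentiable two_ne_zero) (hz.differentiable two_ne_zero)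
    hsphere s
  have hξ'ξ'' := sum_mul_deriv_eq_zero_of_sum_sq_eq
    hx.differentiable_deriv_two hy.differentiable_deriv_two hz.differentiable_deriv_two hunit s
  obtain ⟨hx'', hy''⟩ :=
    eq_dot_mul_add_det_mul_cross_of_orthonormal (hsphere s) (hunit s) hξξ' hξ'ξ'' (hκ s)
  rw [funext hK, deriv_deriv_mul_sub_mul_deriv hx hy]
  linear_combination y s * hx'' - x s * hy'' + (κ s * deriv z s) * hsphere s - (κ s * z s) * hξξ'
end

section
/- For a unit-speed spherical curve ξ = (x,y,z) with spherical angular momentum K(s) = x'y − xy', the identity z(s)² + z'(s)² + K(s)² = 1 holds for all s. -/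
/-! Differentiating `x² + y² + z² = 1` shows `ξ ⊥ ξ'`, so `ξ, ξ', ξ × ξ'` is an orthonormal
frame. The third coordinates of these vectors are `z, z', -K`, i.e. the third row of an
orthogonal matrix, which therefore has unit length. -/

theorem mul_deriv_add_mul_deriv_add_mul_deriv_eq_zero {x y z : ℝ → ℝ} {c : ℝ}
    (hx : Differentiable ℝ x) (hy : Differentiable ℝ y) (hz : Differentiable ℝ z)
    (hconst : ∀ s, x s ^ 2 + y s ^ 2 + z s ^ 2 = c) (s : ℝ) :
    x s * deriv x s + y s * deriv y s + z s * deriv z s = 0 := by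
  have hderiv : HasDerivAt (fun t => x t ^ 2 + y t ^ 2 + z t ^ 2)
      (2 * x s ^ 1 * deriv x s + 2 * y s ^ 1 * deriv y s + 2 * z s ^ 1 * deriv z s) s :=
    (((hx s).hasDerivAt.pow 2).add ((hy s).hasDerivAt.pow 2)).add ((hz s).hasDerivAt.pow 2)
  rw [funext hconst] at hderiv
  linear_combination (hderiv.unique (hasDerivAt_const s c)) / 2

theorem sq_add_sq_add_cross_sq_eq_one {a b c p q r : ℝ}
    (hu : a ^ 2 + b ^ 2 + c ^ 2 = 1) (hv : p ^ 2 + q ^ 2 + r ^ 2 = 1)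
    (horth : a * p + b * q + c * r = 0) :
    c ^ 2 + r ^ 2 + (p * b - a * q) ^ 2 = 1 := by
  linear_combination (p ^ 2 + q ^ 2) * hu + (1 - c ^ 2) * hv - (a * p + b * q - c * r) * horth

/-- For a unit-speed spherical curve ξ = (x,y,z) with spherical angular
momentum K = x'y − xy', one has z² + z'² + K² = 1. -/
theorem z_sq_add_z_deriv_sq_add_momentum_sq_eq_one
    (x y z : ℝ → ℝ)
    (hx : Differentiable ℝ x) (hy : Differentiable ℝ y) (hz : Differentiable ℝ z)
    (hsphere : ∀ s, x s ^ 2 + y s ^ 2 + z s ^ 2 = 1)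
    (hunit : ∀ s, deriv x s ^ 2 + deriv y s ^ 2 + deriv z s ^ 2 = 1)
    (K : ℝ → ℝ)
    (hK : ∀ s, K s = deriv x s * y s - x s * deriv y s) :
    ∀ s, z s ^ 2 + deriv z s ^ 2 + K s ^ 2 = 1 := by
  intro s
  rw [hK s]
  exact sq_add_sq_add_cross_sq_eq_one (hsphere s) (hunit s)
    (mul_deriv_add_mul_deriv_add_mul_deriv_eq_zero hx hy hz hsphere s)
end

section
/- Let H : (0,∞) → ℝ be continuous and h ≥ 0. If A satisfies the linear ODE z·A'(z) + 2A(z) = 2H(z), then K(z) := √(h² + (1−h²)z²)·A(z)/√(1 + h²A(z)²) satisfies the helicoidal mean curvature equation 2H(z) = [(h² + (1−h²)z²)·z·K'(z) + (2h²(1−K(z)²) + (1−h²)z²)·K(z)] / (h²(1−K(z)²) + (1−h²)z²)^{3/2}, on any interval where h²(1−K²) + (1−h²)z² > 0. -/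
/-!
Writing `D = h²(1 - K²) + (1 - h²)z²`, the helicoidal mean curvature expression is
`z (K/√D)' + 2 K/√D = (z² · K/√D)'/z`. For `K = √P · A/√Q` with `P = h² + (1 - h²)z²` and
`Q = 1 + h²A²` one finds `D = P/Q`, hence `K/√D = A` near any point where `D > 0`, and the
expression becomes `z A' + 2A = 2H`.
-/

open Real Filter Topology

lemma rpow_three_halves_eq_mul_sqrt {x : ℝ} (hx : 0 ≤ x) : x ^ ((3:ℝ)/2) = x * √x := by
  rw [show (3:ℝ)/2 = 1 + 1/2 by norm_num, rpow_add' hx (by norm_num), rpow_one, ← sqrt_eq_rpow]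

def helicoidalDenom (h : ℝ) (K : ℝ → ℝ) (t : ℝ) : ℝ := h^2 * (1 - K t ^ 2) + (1 - h^2) * t^2

lemma hasDerivAt_helicoidalDenom {h z : ℝ} {K : ℝ → ℝ} (hK : DifferentiableAt ℝ K z) :
    HasDerivAt (helicoidalDenom h K) (-2 * h^2 * K z * deriv K z + 2 * (1 - h^2) * z) z :=
  ((((hK.hasDerivAt.pow 2).const_sub 1).const_mul (h^2)).add
    ((hasDerivAt_pow 2 z).const_mul (1 - h^2))).congr_deriv (by push_cast; ring)

lemma helicoidal_mean_curvature_eq_deriv_div_sqrt {h z : ℝ} {K : ℝ → ℝ} (hK : DifferentiableAt ℝ K z)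
    (hD : 0 < helicoidalDenom h K z) :
    ((h^2 + (1 - h^2) * z^2) * z * deriv K z
        + (2 * h^2 * (1 - K z ^ 2) + (1 - h^2) * z^2) * K z)
      / helicoidalDenom h K z ^ ((3:ℝ)/2)
      = z * deriv (fun t => K t / √(helicoidalDenom h K t)) z
        + 2 * (K z / √(helicoidalDenom h K z)) := by
  have hquot : HasDerivAt (fun t => K t / √(helicoidalDenom h K t)) _ z :=
    hK.hasDerivAt.div ((hasDerivAt_helicoidalDenom hK).sqrt hD.ne') (sqrt_pos.2 hD).ne'
  rw [hquot.deriv, rpow_three_halves_eq_mul_sqrt hD.le]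
  have hs : √(helicoidalDenom h K z) ^ 2 = helicoidalDenom h K z := sq_sqrt hD.le
  field_simp
  rw [hs]
  unfold helicoidalDenom
  ring

section Profile

variable {h : ℝ} {A K : ℝ → ℝ}
  (hK : ∀ t, K t = √(h^2 + (1 - h^2) * t^2) * A t / √(1 + h^2 * A t ^ 2))
include hK

lemma helicoidalDenom_eq_div {t : ℝ} (hP : 0 ≤ h^2 + (1 - h^2) * t^2) :
    helicoidalDenom h K t = (h^2 + (1 - h^2) * t^2) / (1 + h^2 * A t ^ 2) := by
  have hQ : 0 < 1 + h^2 * A t ^ 2 := by positivity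
  rw [helicoidalDenom, hK, div_pow, mul_pow, sq_sqrt hP, sq_sqrt hQ.le]
  field_simp
  ring

lemma pos_of_helicoidalDenom_pos {t : ℝ} (hD : 0 < helicoidalDenom h K t) :
    0 < h^2 + (1 - h^2) * t^2 := by
  by_contra! hP
  have hK0 : K t = 0 := by rw [hK, sqrt_eq_zero'.2 hP, zero_mul, zero_div]
  rw [helicoidalDenom, hK0] at hD
  linarith

lemma div_sqrt_helicoidalDenom_eq {t : ℝ} (hP : 0 < h^2 + (1 - h^2) * t^2) :
    K t / √(helicoidalDenom h K t) = A t := by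
  have hQ : 0 < 1 + h^2 * A t ^ 2 := by positivity
  rw [helicoidalDenom_eq_div hK hP.le, sqrt_div' _ hQ.le, hK]
  field_simp

lemma div_sqrt_helicoidalDenom_eventuallyEq {z : ℝ} (hP : 0 < h^2 + (1 - h^2) * z^2) :
    (fun t => K t / √(helicoidalDenom h K t)) =ᶠ[𝓝 z] A := by
  have hcont : Continuous fun t : ℝ => h^2 + (1 - h^2) * t^2 := by fun_prop
  filter_upwards [continuousAt_const.eventually_lt hcont.continuousAt hP] with t ht
  exact div_sqrt_helicoidalDenom_eq hK ht

lemma differentiableAt_helicoidal_profile {z : ℝ} (hA : DifferentiableAt ℝ A z)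
    (hP : 0 < h^2 + (1 - h^2) * z^2) : DifferentiableAt ℝ K z := by
  rw [funext hK]
  fun_prop (disch := positivity)

end Profile

theorem prescribed_mean_curvature_helicoidal_general
    (h : ℝ)
    (H A : ℝ → ℝ)
    (hA : DifferentiableOn ℝ A (Set.Ioi 0))
    (hODE : ∀ z ∈ Set.Ioi (0:ℝ), z * deriv A z + 2 * A z = 2 * H z)
    (K : ℝ → ℝ)
    (hKdef : ∀ z, K z = Real.sqrt (h^2 + (1 - h^2) * z^2) * A z
        / Real.sqrt (1 + h^2 * A z ^ 2)) :
    ∀ z ∈ Set.Ioi (0:ℝ),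
      h^2 * (1 - K z ^ 2) + (1 - h^2) * z^2 > 0 →
      2 * H z =
        ((h^2 + (1 - h^2) * z^2) * z * deriv K z
          + (2 * h^2 * (1 - K z ^ 2) + (1 - h^2) * z^2) * K z)
        / (h^2 * (1 - K z ^ 2) + (1 - h^2) * z^2) ^ ((3:ℝ)/2) := by
  intro z hz hD
  have hP := pos_of_helicoidalDenom_pos hKdef hD
  have hAz : DifferentiableAt ℝ A z := hA.differentiableAt (Ioi_mem_nhds hz)
  calc 2 * H z = z * deriv A z + 2 * A z := (hODE z hz).symm
    _ = z * deriv (fun t => K t / √(helicoidalDenom h K t)) z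
          + 2 * (K z / √(helicoidalDenom h K z)) := by
      rw [(div_sqrt_helicoidalDenom_eventuallyEq hKdef hP).deriv_eq,
        div_sqrt_helicoidalDenom_eq hKdef hP]
    _ = _ := (helicoidal_mean_curvature_eq_deriv_div_sqrt (differentiableAt_helicoidal_profile hKdef hAz hP) hD).symm

/-- If A solves the linear ODE z·A' + 2A = 2H on (0,∞), then
K(z) = √(h² + (1−h²)z²)·A(z)/√(1 + h²A(z)²) satisfies the mean curvature equation of
a helicoidal surface with pitch h:
2H = [(h² + (1−h²)z²)zK' + (2h²(1−K²) + (1−h²)z²)K] / (h²(1−K²) + (1−h²)z²)^{3/2},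
wherever h²(1−K²) + (1−h²)z² > 0. -/
theorem prescribed_mean_curvature_helicoidal
    (h : ℝ) (hh : 0 ≤ h)
    (H A : ℝ → ℝ)
    (hHcont : ContinuousOn H (Set.Ioi 0))
    (hA : DifferentiableOn ℝ A (Set.Ioi 0))
    (hODE : ∀ z ∈ Set.Ioi (0:ℝ), z * deriv A z + 2 * A z = 2 * H z)
    (K : ℝ → ℝ)
    (hKdef : ∀ z, K z = Real.sqrt (h^2 + (1 - h^2) * z^2) * A z
        / Real.sqrt (1 + h^2 * A z ^ 2)) :
    ∀ z ∈ Set.Ioi (0:ℝ),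
      h^2 * (1 - K z ^ 2) + (1 - h^2) * z^2 > 0 →
      2 * H z =
        ((h^2 + (1 - h^2) * z^2) * z * deriv K z
          + (2 * h^2 * (1 - K z ^ 2) + (1 - h^2) * z^2) * K z)
        / (h^2 * (1 - K z ^ 2) + (1 - h^2) * z^2) ^ ((3:ℝ)/2) :=
  prescribed_mean_curvature_helicoidal_general h H A hA hODE K hKdef
end

section
/- For h ≥ 0 and 0 ≤ c < 1/2, the function K(z) = −c√(h² + (1−h²)z²)/√(z⁴ + h²c²) satisfies the condition z² + K(z)² < 1 if and only if z⁴ + c² < z², equivalently c² < z²(1−z²). -/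
open Real

lemma neg_mul_sqrt_div_sqrt_sq {a b : ℝ} (c : ℝ) (ha : 0 ≤ a) (hb : 0 ≤ b) :
    (-c * √a / √b) ^ 2 = c ^ 2 * a / b := by
  rw [div_pow, mul_pow, sq_sqrt ha, sq_sqrt hb, neg_sq]

theorem minimal_helicoidal_momentum_condition_general
    (h c z : ℝ)
    (hz : z ∈ Set.Ioo (0:ℝ) 1)
    (K : ℝ)
    (hKdef : K = -c * Real.sqrt (h^2 + (1 - h^2) * z^2) / Real.sqrt (z^4 + h^2 * c^2)) :
    (z^2 + K^2 < 1 ↔ z^4 + c^2 < z^2) ∧ (z^4 + c^2 < z^2 ↔ c^2 < z^2 * (1 - z^2)) := by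
  obtain ⟨hz0, hz1⟩ := hz
  have hD : 0 < z^4 + h^2 * c^2 := by positivity
  have hz2 : z^2 < 1 := by nlinarith
  have hA : 0 ≤ h^2 + (1 - h^2) * z^2 := by
    nlinarith [mul_nonneg (sq_nonneg h) (sub_nonneg.2 hz2.le)]
  have hK : K^2 = c^2 * (h^2 + (1 - h^2) * z^2) / (z^4 + h^2 * c^2) :=
    hKdef ▸ neg_mul_sqrt_div_sqrt_sq c hA hD.le
  -- `h` drops out of the comparison `K² < 1 - z²`:
  have cancel_h : (1 - z^2) * (z^4 + h^2 * c^2) - c^2 * (h^2 + (1 - h^2) * z^2)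
      = z^2 * (z^2 - z^4 - c^2) := by ring
  refine ⟨?_, by constructor <;> intro <;> linarith⟩
  calc z^2 + K^2 < 1
      ↔ K^2 < 1 - z^2 := by constructor <;> intro <;> linarith
    _ ↔ c^2 * (h^2 + (1 - h^2) * z^2) < (1 - z^2) * (z^4 + h^2 * c^2) := by
      rw [hK, div_lt_iff₀ hD]
    _ ↔ 0 < z^2 * (z^2 - z^4 - c^2) := by rw [← sub_pos, cancel_h]
    _ ↔ 0 < z^2 - z^4 - c^2 := mul_pos_iff_of_pos_left (by positivity)
    _ ↔ z^4 + c^2 < z^2 := by constructor <;> intro <;> linarith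

/-- For h ≥ 0, 0 ≤ c < 1/2 and z ∈ (0,1), the function
K(z) = −c√(h² + (1−h²)z²)/√(z⁴ + h²c²) satisfies z² + K(z)² < 1 iff z⁴ + c² < z²,
equivalently iff c² < z²(1−z²). -/
theorem minimal_helicoidal_momentum_condition
    (h c z : ℝ) (hh : 0 ≤ h) (hc : 0 ≤ c) (hc' : c < 1/2)
    (hz : z ∈ Set.Ioo (0:ℝ) 1)
    (K : ℝ)
    (hKdef : K = -c * Real.sqrt (h^2 + (1 - h^2) * z^2) / Real.sqrt (z^4 + h^2 * c^2)) :
    (z^2 + K^2 < 1 ↔ z^4 + c^2 < z^2) ∧ (z^4 + c^2 < z^2 ↔ c^2 < z^2 * (1 - z^2)) :=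
  minimal_helicoidal_momentum_condition_general h c z hz K hKdef
end

section
/- Given β ∈ (0, π/2) and h > 0 with h ≠ 1, the map φ(s,t) = (s ± π/4, t/√(1+h²)) (sign chosen + if h < 1, − if h > 1) pulls back the metric d s̃² + (h² cos² s̃ + sin² s̃) d t̃² of the Lawson helicoid Hel₀^h to the metric ds² + ((1 + cos β sin 2s)/2) dt² of the catenoid Cat_β, provided cos β = |1−h²|/(1+h²); in particular the two metrics are locally isometric. -/
open Real

/-! Under the shift `s ↦ s ± π/4` the double angle `2s` moves by `±π/2`, turning `cos 2s` into
`∓ sin 2s`. Since `h² cos² x + sin² x` is affine in `cos 2x`, the pulled-back coefficient is affine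
in `sin 2s`, with constant term `1/2` and slope `±(1 - h²) / (2 (1 + h²))`; the hypothesis on `β`
says exactly that this slope is `cos β / 2`. -/

/-- The `dt̃²` coefficient of the Lawson helicoid metric. -/
noncomputable def helicoidCoeff (h x : ℝ) : ℝ := h ^ 2 * cos x ^ 2 + sin x ^ 2

/-- The `dt²` coefficient of the catenoid metric, with `c = cos β`. -/
noncomputable def catenoidCoeff (c s : ℝ) : ℝ := (1 + c * sin (2 * s)) / 2

lemma helicoidCoeff_eq_cos_two_mul (h x : ℝ) :
    helicoidCoeff h x = ((h ^ 2 + 1) + (h ^ 2 - 1) * cos (2 * x)) / 2 := by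
  rw [helicoidCoeff, cos_sq x, sin_sq_eq_half_sub]
  ring

lemma cos_two_mul_add_sign_mul_pi_div_four {σ : ℝ} (hσ : σ = 1 ∨ σ = -1) (x : ℝ) :
    cos (2 * (x + σ * (π / 4))) = -σ * sin (2 * x) := by
  rcases hσ with rfl | rfl
  · rw [show 2 * (x + 1 * (π / 4)) = 2 * x + π / 2 by ring, cos_add_pi_div_two]
    ring
  · rw [show 2 * (x + -1 * (π / 4)) = 2 * x - π / 2 by ring, cos_sub_pi_div_two]
    ring

theorem helicoidCoeff_add_sign_mul_pi_div_four {σ h c : ℝ} (hσ : σ = 1 ∨ σ = -1)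
    (hc : c = σ * (1 - h ^ 2) / (1 + h ^ 2)) (s : ℝ) :
    helicoidCoeff h (s + σ * (π / 4)) / (1 + h ^ 2) = catenoidCoeff c s := by
  have hden : 1 + h ^ 2 ≠ 0 := by positivity
  rw [helicoidCoeff_eq_cos_two_mul, cos_two_mul_add_sign_mul_pi_div_four hσ, catenoidCoeff, hc]
  field_simp
  ring

theorem catenoid_locally_isometric_to_lawson_helicoid_general
    (β h : ℝ) (hne : h ≠ 1)
    (hcos : (h < 1 → Real.cos β = (1 - h^2) / (1 + h^2)) ∧
            (1 < h → Real.cos β = (h^2 - 1) / (1 + h^2))) :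
    ∀ s : ℝ,
      (h^2 * Real.cos (s + (if h < 1 then 1 else -1) * (π/4)) ^ 2
        + Real.sin (s + (if h < 1 then 1 else -1) * (π/4)) ^ 2) / (1 + h^2)
      = (1 + Real.cos β * Real.sin (2*s)) / 2 := by
  have hσ : (if h < 1 then 1 else -1 : ℝ) = 1 ∨ (if h < 1 then 1 else -1 : ℝ) = -1 := by
    split_ifs <;> simp
  have hc : cos β = (if h < 1 then 1 else -1) * (1 - h ^ 2) / (1 + h ^ 2) := by
    rcases hne.lt_or_gt with hlt | hgt
    · rw [if_pos hlt, hcos.1 hlt, one_mul]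
    · rw [if_neg hgt.not_gt, hcos.2 hgt]
      ring
  exact helicoidCoeff_add_sign_mul_pi_div_four hσ hc

/-- For β ∈ (0,π/2) and h > 0, h ≠ 1, the map
φ(s,t) = (s ± π/4, t/√(1+h²)) (sign + if h < 1, − if h > 1) pulls back the metric
d s̃² + (h² cos² s̃ + sin² s̃) d t̃² of the Lawson helicoid Hel₀^h to the metric
ds² + ((1 + cos β sin 2s)/2) dt² of the catenoid Cat_β, provided
cos β = |1−h²|/(1+h²).  In coordinates: the pulled-back coefficient of ds² is 1 and
that of dt² is (h² cos²(s ± π/4) + sin²(s ± π/4))/(1+h²) = (1 + cos β sin 2s)/2. -/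
theorem catenoid_locally_isometric_to_lawson_helicoid
    (β h : ℝ) (hβ : β ∈ Set.Ioo 0 (π/2)) (hh : 0 < h) (hne : h ≠ 1)
    (hcos : (h < 1 → Real.cos β = (1 - h^2) / (1 + h^2)) ∧
            (1 < h → Real.cos β = (h^2 - 1) / (1 + h^2))) :
    ∀ s : ℝ,
      (h^2 * Real.cos (s + (if h < 1 then 1 else -1) * (π/4)) ^ 2
        + Real.sin (s + (if h < 1 then 1 else -1) * (π/4)) ^ 2) / (1 + h^2)
      = (1 + Real.cos β * Real.sin (2*s)) / 2 :=
  catenoid_locally_isometric_to_lawson_helicoid_general β h hne hcos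
end
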